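/- Let q(x,ξ) be a symbol satisfying the scaling property q(x, t^{E(x)}ξ) = t q(x,ξ) and the bound |q(x,ξ)| ≤ C(1 + ‖ξ‖²), where E(x) is symmetric with eigenvalues in [λ(x), Λ(x)], λ(x) > 0. Then there exist constants C₁, C₂ > 0 such that for all x, ξ: |q(x,ξ)| ≤ C₁‖ξ‖^{1/Λ(x)} for ‖ξ‖ ≤ 1, and |q(x,ξ)| ≤ C₂‖ξ‖^{1/λ(x)} for ‖ξ‖ ≥ 1. -/

import Mathlib

open Matrix MeasureTheory
open scoped ENNReal

noncomputable def toCLM {d : ℕ} (A : Matrix (Fin d) (Fin d) ℝ) :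
    EuclideanSpace ℝ (Fin d) →L[ℝ] EuclideanSpace ℝ (Fin d) :=
  LinearMap.toContinuousLinearMap (Matrix.toEuclideanLin A)

/-- `mexp A r` is the matrix power `r^A := exp(A log r)`, acting on Euclidean space,
so that `‖mexp A r‖` is the operator norm induced by the Euclidean norm. -/
noncomputable def mexp {d : ℕ} (A : Matrix (Fin d) (Fin d) ℝ) (r : ℝ) :
    EuclideanSpace ℝ (Fin d) →L[ℝ] EuclideanSpace ℝ (Fin d) :=
  NormedSpace.exp (Real.log r • toCLM A)

/-!
For `ξ ≠ 0` put `t = ‖ξ‖ ^ (1 / e)`; homogeneity gives `q ξ = t * q (t^(-E) ξ)`. In an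
orthonormal eigenbasis of the symmetric matrix `E`, `t^(-E)` multiplies the `i`-th coordinate by
`t ^ (-μᵢ) = ‖ξ‖⁻¹ ^ (μᵢ / e)`. With `e = Λ` when `‖ξ‖ ≤ 1` and `e = λ` when `‖ξ‖ ≥ 1` each factor
is at most `‖ξ‖⁻¹`, so `t^(-E) ξ` lies in the unit ball, where the growth bound gives
`|q| ≤ 2C + 1`.
-/

open NormedSpace

theorem NormedSpace.exp_apply_of_apply_eq_smul {V : Type*} [NormedAddCommGroup V]
    [NormedSpace ℝ V] [CompleteSpace V] (T : V →L[ℝ] V) {v : V} {μ : ℝ} (hv : T v = μ • v) :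
    exp T v = Real.exp μ • v := by
  have hpow : ∀ n : ℕ, (T ^ n) v = μ ^ n • v := by
    intro n
    induction n with
    | zero => simp
    | succ n ih => rw [pow_succ, mul_apply_eq_comp, hv, map_smul, ih, smul_smul, pow_succ']
  have hT := (exp_series_hasSum_exp' (𝕂 := ℝ) T).mapL (ContinuousLinearMap.apply ℝ V v)
  have hμ := (exp_series_hasSum_exp' (𝕂 := ℝ) μ).smul_const v
  simp only [ContinuousLinearMap.apply_apply, _root_.smul_apply, hpow, smul_smul] at hT
  rw [Real.exp_eq_exp_ℝ]
  exact hT.unique hμ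

theorem NormedSpace.exp_apply_exp_neg_apply {V : Type*} [NormedAddCommGroup V]
    [NormedSpace ℝ V] [CompleteSpace V] (T : V →L[ℝ] V) (v : V) : exp T (exp (-T) v) = v := by
  -- `exp_add_of_commute` needs a normed `ℚ`-algebra structure, which is not an instance here.
  let +nondep : NormedAlgebra ℚ (V →L[ℝ] V) := .restrictScalars ℚ ℝ _
  rw [← mul_apply_eq_comp, ← NormedSpace.exp_add_of_commute (Commute.refl T).neg_right,
    add_neg_cancel, exp_zero, one_apply_eq_self]

theorem toCLM_apply_eigenvectorBasis {d : ℕ} {A : Matrix (Fin d) (Fin d) ℝ}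
    (hA : A.IsHermitian) (i : Fin d) :
    toCLM A (hA.eigenvectorBasis i) = hA.eigenvalues i • hA.eigenvectorBasis i := by
  apply (WithLp.equiv 2 (Fin d → ℝ)).injective
  simpa [toCLM, Matrix.toLpLin_apply] using hA.mulVec_eigenvectorBasis i

theorem mexp_apply_eigenvectorBasis {d : ℕ} {A : Matrix (Fin d) (Fin d) ℝ}
    (hA : A.IsHermitian) {r : ℝ} (hr : 0 < r) (i : Fin d) :
    mexp A r (hA.eigenvectorBasis i) = r ^ hA.eigenvalues i • hA.eigenvectorBasis i := by
  rw [mexp, Real.rpow_def_of_pos hr]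
  refine exp_apply_of_apply_eq_smul _ ?_
  rw [_root_.smul_apply, toCLM_apply_eigenvectorBasis, smul_smul]

theorem norm_mexp_apply_le {d : ℕ} {A : Matrix (Fin d) (Fin d) ℝ}
    (hA : A.IsHermitian) {r M : ℝ} (hr : 0 < r) (hM₀ : 0 ≤ M)
    (hM : ∀ i, r ^ hA.eigenvalues i ≤ M) (ξ : EuclideanSpace ℝ (Fin d)) :
    ‖mexp A r ξ‖ ≤ M * ‖ξ‖ := by
  let b := hA.eigenvectorBasis
  have hc : mexp A r ξ =
      b.repr.symm (WithLp.toLp 2 fun i => r ^ hA.eigenvalues i * b.repr ξ i) := by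
    conv_lhs => rw [← b.sum_repr ξ]
    simp only [← b.sum_repr_symm, map_sum, map_smul, b, mexp_apply_eigenvectorBasis hA hr,
      smul_smul, mul_comm]
  rw [hc, b.repr.symm.norm_map, ← b.repr.norm_map ξ,
    ← pow_le_pow_iff_left₀ (norm_nonneg _) (by positivity) two_ne_zero, mul_pow,
    EuclideanSpace.norm_sq_eq, EuclideanSpace.norm_sq_eq, Finset.mul_sum]
  refine Finset.sum_le_sum fun i _ => ?_
  rw [norm_mul, mul_pow]
  gcongr
  rw [Real.norm_of_nonneg (by positivity)]
  exact hM i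

theorem mexp_apply_mexp_inv {d : ℕ} (A : Matrix (Fin d) (Fin d) ℝ) (t : ℝ)
    (ξ : EuclideanSpace ℝ (Fin d)) : mexp A t (mexp A t⁻¹ ξ) = ξ := by
  rw [mexp, mexp, Real.log_inv, _root_.neg_smul _ (toCLM A), exp_apply_exp_neg_apply]

section Homogeneous

variable {d : ℕ} {A : Matrix (Fin d) (Fin d) ℝ} {q : EuclideanSpace ℝ (Fin d) → ℝ}

theorem abs_eq_mul_abs_mexp_inv_of_homogeneous
    (hscale : ∀ ξ (t : ℝ), 0 < t → q (mexp A t ξ) = t * q ξ) {t : ℝ} (ht : 0 < t)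
    (ξ : EuclideanSpace ℝ (Fin d)) : |q ξ| = t * |q (mexp A t⁻¹ ξ)| := by
  conv_lhs => rw [← mexp_apply_mexp_inv A t ξ]
  rw [hscale _ t ht, abs_mul, abs_of_pos ht]

theorem abs_le_mul_rpow_of_homogeneous (hA : A.IsHermitian)
    (hscale : ∀ ξ (t : ℝ), 0 < t → q (mexp A t ξ) = t * q ξ) {B : ℝ}
    (hB : ∀ η, ‖η‖ ≤ 1 → |q η| ≤ B) {ξ : EuclideanSpace ℝ (Fin d)} (hξ : ξ ≠ 0) {e : ℝ}
    (heig : ∀ i, ‖ξ‖⁻¹ ^ (hA.eigenvalues i / e) ≤ ‖ξ‖⁻¹) : |q ξ| ≤ B * ‖ξ‖ ^ (1 / e) := by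
  have hr : 0 < ‖ξ‖ := norm_pos_iff.mpr hξ
  set t := ‖ξ‖ ^ (1 / e)
  have ht : 0 < t := by positivity
  have hrescaled : ‖mexp A t⁻¹ ξ‖ ≤ 1 := by
    refine (norm_mexp_apply_le hA (inv_pos.mpr ht) (inv_nonneg.mpr hr.le) (fun i => ?_) ξ).trans
      (inv_mul_cancel₀ hr.ne').le
    rw [Real.inv_rpow ht.le, ← Real.rpow_mul hr.le, ← Real.inv_rpow hr.le, one_div_mul_eq_div]
    exact heig i
  rw [abs_eq_mul_abs_mexp_inv_of_homogeneous hscale ht, mul_comm B]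
  exact mul_le_mul_of_nonneg_left (hB _ hrescaled) ht.le

theorem abs_le_mul_rpow_of_norm_le_one (hA : A.IsHermitian)
    (hscale : ∀ ξ (t : ℝ), 0 < t → q (mexp A t ξ) = t * q ξ) {B : ℝ}
    (hB : ∀ η, ‖η‖ ≤ 1 → |q η| ≤ B) {ξ : EuclideanSpace ℝ (Fin d)} (hξ : ξ ≠ 0)
    (hξ₁ : ‖ξ‖ ≤ 1) {L : ℝ} (hL : 0 < L) (heig : ∀ i, hA.eigenvalues i ≤ L) :
    |q ξ| ≤ B * ‖ξ‖ ^ (1 / L) :=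
  abs_le_mul_rpow_of_homogeneous hA hscale hB hξ fun i => by
    have h₁ : 1 ≤ ‖ξ‖⁻¹ := (one_le_inv₀ (norm_pos_iff.mpr hξ)).mpr hξ₁
    simpa using Real.rpow_le_rpow_of_exponent_le h₁ ((div_le_one hL).mpr (heig i))

theorem abs_le_mul_rpow_of_one_le_norm (hA : A.IsHermitian)
    (hscale : ∀ ξ (t : ℝ), 0 < t → q (mexp A t ξ) = t * q ξ) {B : ℝ}
    (hB : ∀ η, ‖η‖ ≤ 1 → |q η| ≤ B) {ξ : EuclideanSpace ℝ (Fin d)} (hξ₁ : 1 ≤ ‖ξ‖)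
    {l : ℝ} (hl : 0 < l) (heig : ∀ i, l ≤ hA.eigenvalues i) : |q ξ| ≤ B * ‖ξ‖ ^ (1 / l) := by
  have hr : 0 < ‖ξ‖ := one_pos.trans_le hξ₁
  refine abs_le_mul_rpow_of_homogeneous hA hscale hB (norm_pos_iff.mp hr) fun i => ?_
  simpa using Real.rpow_le_rpow_of_exponent_ge (inv_pos.mpr hr) (inv_le_one_of_one_le₀ hξ₁)
    ((one_le_div hl).mpr (heig i))

end Homogeneous

theorem stmt15 (d : ℕ)
    (E : EuclideanSpace ℝ (Fin d) → Matrix (Fin d) (Fin d) ℝ)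
    (hsym : ∀ x, (E x).IsHermitian)
    (lam Lam : EuclideanSpace ℝ (Fin d) → ℝ)
    (hlam : ∀ x, 0 < lam x)
    (hlo : ∀ x i, lam x ≤ (hsym x).eigenvalues i)
    (hhi : ∀ x i, (hsym x).eigenvalues i ≤ Lam x)
    (q : EuclideanSpace ℝ (Fin d) → EuclideanSpace ℝ (Fin d) → ℝ)
    (hq0 : ∀ x, q x 0 = 0)
    (hscale : ∀ x ξ (t : ℝ), 0 < t → q x (mexp (E x) t ξ) = t * q x ξ)
    (C : ℝ) (hbound : ∀ x ξ, |q x ξ| ≤ C * (1 + ‖ξ‖ ^ 2)) :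
    ∃ C₁ C₂ : ℝ, 0 < C₁ ∧ 0 < C₂ ∧ ∀ x ξ : EuclideanSpace ℝ (Fin d),
      (‖ξ‖ ≤ 1 → |q x ξ| ≤ C₁ * ‖ξ‖ ^ (1 / Lam x)) ∧
      (1 ≤ ‖ξ‖ → |q x ξ| ≤ C₂ * ‖ξ‖ ^ (1 / lam x)) := by
  have hC : 0 ≤ C := by simpa using (abs_nonneg _).trans (hbound 0 0)
  have hunit : ∀ x η, ‖η‖ ≤ 1 → |q x η| ≤ 2 * C + 1 := fun x η hη => by
    nlinarith [hbound x η, mul_nonneg hC (sub_nonneg.mpr (pow_le_one₀ (n := 2) (norm_nonneg η) hη))]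
  refine ⟨2 * C + 1, 2 * C + 1, by positivity, by positivity, fun x ξ => ⟨fun hξ₁ => ?_,
    fun hξ₁ => abs_le_mul_rpow_of_one_le_norm (hsym x) (hscale x) (hunit x) hξ₁ (hlam x) (hlo x)⟩⟩
  rcases eq_or_ne ξ 0 with rfl | hξ
  · rw [hq0, abs_zero]
    positivity
  obtain ⟨i⟩ : Nonempty (Fin d) := by
    by_contra h
    rw [not_nonempty_iff] at h
    exact hξ (Subsingleton.elim _ _)
  exact abs_le_mul_rpow_of_norm_le_one (hsym x) (hscale x) (hunit x) hξ hξ₁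
    ((hlam x).trans_le ((hlo x i).trans (hhi x i))) (hhi x)
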